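/- Let G be a self-similar group over X, p ≥ 1, and let g₁, …, g_m ∈ G be pairwise non-conjugate elements of infinite order such that for every i and every x ∈ X the element (g_i^{k_{g_i,x}})|_x either has finite order or is conjugate in G to some g_j. For n ≥ 1 define the m×m real matrix A^{(n)} with entries A^{(n)}_{ij} = Σ_{v∈X^n} k_{g_i,v}^{−p} · 𝟙[(g_i^{k_{g_i,v}})|_v is conjugate in G to g_j], where k_{g_i,v} is the least k ≥ 1 with g_i^k(v) = v. Then A^{(n)} = (A^{(1)})^n for every n ≥ 1: the Thurston p-map associated with the n-th level of the action is the n-th power of the Thurston p-map of the first level. (Lemma 4.9 of the paper, in matrix form.) -/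
import Mathlib


open Filter Topology
open scoped ENNReal NNReal

/-- A self-similar group: a group `G` acting on the set of finite words `List X`
by length-preserving bijections, together with a section (restriction) map. -/
structure SelfSimilarGroup (X : Type*) (G : Type*) [Group G] where
  act : G → List X → List X
  sec : G → List X → G
  length_act : ∀ g v, (act g v).length = v.length
  act_append : ∀ g v w, act g (v ++ w) = act g v ++ act (sec g v) w
  sec_append : ∀ g v w, sec g (v ++ w) = sec (sec g v) w
  act_one : ∀ v, act 1 v = v
  sec_one : ∀ v, sec 1 v = 1
  act_mul : ∀ g h v, act (g * h) v = act g (act h v)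
  sec_mul : ∀ g h v, sec (g * h) v = sec g (act h v) * sec h v

/-- Word length with respect to a finite generating set `S`. -/
noncomputable def wordLength {G : Type*} [Group G] (S : Finset G) (g : G) : ℕ :=
  sInf {n | ∃ w : List G, (∀ s ∈ w, s ∈ S) ∧ w.length = n ∧ w.prod = g}

/-- The contraction coefficient `η_{p,n} ∈ [0,∞]`: the limsup of
`(Σ_{v ∈ X^n} l(g|_v)^p)^{1/p} / l(g)` as `l(g) → ∞` (along the filter generated by
the sets `{g : l(g) ≥ m}`).  Words of length `n` are encoded as functions `Fin n → X`. -/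
noncomputable def eta {X G : Type*} [Fintype X] [Group G]
    (A : SelfSimilarGroup X G) (S : Finset G) (p : ℝ) (n : ℕ) : ℝ≥0∞ :=
  Filter.limsup
    (fun g : G =>
      (∑ f : Fin n → X, (wordLength S (A.sec g (List.ofFn f)) : ℝ≥0∞) ^ p) ^ (1 / p)
        / (wordLength S g : ℝ≥0∞))
    (Filter.comap (wordLength S) Filter.atTop)

/-- `N` is the nucleus of a contracting self-similar group: a finite subset containing `1`,
closed under sections, absorbing all sections of every element at deep enough levels. -/
def SelfSimilarGroup.IsNucleus {X G : Type*} [Group G]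
    (A : SelfSimilarGroup X G) (N : Finset G) : Prop :=
  (1 : G) ∈ N ∧ (∀ g ∈ N, ∀ v : List X, A.sec g v ∈ N) ∧
    ∀ g : G, ∃ n₀ : ℕ, ∀ v : List X, n₀ ≤ v.length → A.sec g v ∈ N

/-- The length of the cycle of the word `v` under the permutation induced by `g`:
the least `k ≥ 1` with `g^k(v) = v`. -/
noncomputable def cycLen {X G : Type*} [Group G] (A : SelfSimilarGroup X G)
    (g : G) (v : List X) : ℕ :=
  sInf {k | 1 ≤ k ∧ A.act (g ^ k) v = v}

open Classical in
/-- The matrix of the Thurston `p`-map on the span of the conjugacy classes `[g 0],…,[g (m-1)]`,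
computed on the `n`-th level of the tree (words of length `n` are encoded as `Fin n → X`):
`A^{(n)}_{ij} = Σ_{v∈X^n} k_{g_i,v}^{−p} · 𝟙[(g_i^{k_{g_i,v}})|_v ~ g_j]`. -/
noncomputable def thurstonMatrix {X G : Type*} [Fintype X] [Group G]
    (A : SelfSimilarGroup X G) (p : ℝ) {m : ℕ} (g : Fin m → G) (n : ℕ) :
    Matrix (Fin m) (Fin m) ℝ :=
  Matrix.of fun i j =>
    ∑ v : Fin n → X,
      (cycLen A (g i) (List.ofFn v) : ℝ) ^ (-p) *
        (if IsConj (A.sec ((g i) ^ (cycLen A (g i) (List.ofFn v))) (List.ofFn v)) (g j)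
         then 1 else 0)


namespace SSGaux

variable {X G : Type*} [Group G] (A : SelfSimilarGroup X G)

lemma act_injective (t : G) : Function.Injective (A.act t) := by
  intro a b hab
  have h : ∀ v, A.act t⁻¹ (A.act t v) = v := fun v => by
    rw [← A.act_mul, inv_mul_cancel, A.act_one]
  rw [← h a, hab, h b]

lemma act_pow_fixed {g : G} {v : List X} (h : A.act g v = v) : ∀ k, A.act (g ^ k) v = v
  | 0 => by rw [pow_zero, A.act_one]
  | k + 1 => by rw [pow_succ, A.act_mul, h, act_pow_fixed h k]

lemma sec_pow_fixed {g : G} {v : List X} (h : A.act g v = v) :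
    ∀ k, A.sec (g ^ k) v = (A.sec g v) ^ k
  | 0 => by rw [pow_zero, pow_zero, A.sec_one]
  | k + 1 => by rw [pow_succ, A.sec_mul, h, sec_pow_fixed h k, pow_succ]

lemma exists_cycle [Finite X] (g : G) (v : List X) :
    ∃ k, 1 ≤ k ∧ A.act (g ^ k) v = v := by
  have hfin : Finite {w : List X // w.length = v.length} := by
    apply Finite.of_injective
      (fun w : {w : List X // w.length = v.length} =>
        (fun i : Fin v.length => w.val.get (Fin.cast w.prop.symm i)))
    intro a b hab
    ext1
    apply List.ext_get (by rw [a.prop, b.prop])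
    intro i h1 h2
    have := congrFun hab ⟨i, by omega⟩
    simpa using this
  obtain ⟨a, b, hne, heq⟩ := Finite.exists_ne_map_eq_of_infinite
    (fun k : ℕ => (⟨A.act (g ^ k) v, A.length_act _ _⟩ : {w : List X // w.length = v.length}))
  have heq' : A.act (g ^ a) v = A.act (g ^ b) v := congrArg Subtype.val heq
  rcases Nat.lt_or_ge a b with hab | hab
  · refine ⟨b - a, by omega, ?_⟩
    have : g ^ b = g ^ a * g ^ (b - a) := by rw [← pow_add]; congr 1; omega
    rw [this, A.act_mul] at heq'
    exact act_injective A (g ^ a) heq'.symm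
  · have hba : b < a := by omega
    refine ⟨a - b, by omega, ?_⟩
    have : g ^ a = g ^ b * g ^ (a - b) := by rw [← pow_add]; congr 1; omega
    rw [this, A.act_mul] at heq'
    exact act_injective A (g ^ b) heq'

lemma cycLen_spec [Finite X] (g : G) (v : List X) :
    1 ≤ cycLen A g v ∧ A.act (g ^ cycLen A g v) v = v :=
  Nat.sInf_mem (exists_cycle A g v)

lemma cycLen_le [Finite X] {g : G} {v : List X} {k : ℕ} (h1 : 1 ≤ k)
    (h2 : A.act (g ^ k) v = v) : cycLen A g v ≤ k :=
  Nat.sInf_le ⟨h1, h2⟩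

lemma act_pow_eq_iff_dvd [Finite X] (g : G) (v : List X) (j : ℕ) :
    A.act (g ^ j) v = v ↔ cycLen A g v ∣ j := by
  obtain ⟨hk1, hkfix⟩ := cycLen_spec A g v
  set k := cycLen A g v with hk
  constructor
  · intro hj
    have hsplit : g ^ j = g ^ (k * (j / k)) * g ^ (j % k) := by
      rw [← pow_add, Nat.div_add_mod]
    rw [hsplit, A.act_mul] at hj
    have hq : A.act (g ^ (k * (j / k))) v = v := by
      rw [pow_mul]; exact act_pow_fixed A hkfix _
    have hr : A.act (g ^ (j % k)) v = v := by
      apply act_injective A (g ^ (k * (j / k)))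
      rw [hj, hq]
    rcases Nat.eq_zero_or_pos (j % k) with h0 | h0
    · exact Nat.dvd_of_mod_eq_zero h0
    · have h1 := cycLen_le A h0 hr
      have h2 := Nat.mod_lt j (show 0 < k by omega)
      omega
  · rintro ⟨s, rfl⟩
    rw [pow_mul]
    exact act_pow_fixed A hkfix s

lemma cycLen_append [Finite X] (g : G) (v w : List X) :
    cycLen A g (v ++ w) = cycLen A g v * cycLen A (A.sec (g ^ cycLen A g v) v) w := by
  obtain ⟨hk1, hkfix⟩ := cycLen_spec A g v
  set k := cycLen A g v with hkdef
  set h := A.sec (g ^ k) v with hhdef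
  obtain ⟨hl1, hlfix⟩ := cycLen_spec A h w
  set l := cycLen A h w with hldef
  have hsec : ∀ s : ℕ, A.sec (g ^ (k * s)) v = h ^ s := fun s => by
    rw [pow_mul, sec_pow_fixed A hkfix]
  have key : ∀ j : ℕ, (A.act (g ^ j) (v ++ w) = v ++ w) ↔
      (k ∣ j ∧ A.act (A.sec (g ^ j) v) w = w) := by
    intro j
    rw [A.act_append]
    constructor
    · intro hj
      obtain ⟨h1, h2⟩ := List.append_inj hj (A.length_act _ _)
      exact ⟨(act_pow_eq_iff_dvd A g v j).1 h1, h2⟩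
    · rintro ⟨hd, h2⟩
      rw [(act_pow_eq_iff_dvd A g v j).2 hd, h2]
  apply le_antisymm
  · apply Nat.sInf_le
    refine ⟨Nat.mul_pos hk1 hl1, (key (k * l)).2 ⟨Dvd.intro l rfl, ?_⟩⟩
    rw [hsec l]
    exact hlfix
  · apply le_csInf (exists_cycle A g (v ++ w))
    rintro j ⟨hj1, hjfix⟩
    obtain ⟨⟨s, rfl⟩, h2⟩ := (key j).1 hjfix
    rw [hsec s] at h2
    have hs1 : 1 ≤ s := by
      rcases Nat.eq_zero_or_pos s with h0 | h0
      · rw [h0, mul_zero] at hj1; omega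
      · exact h0
    exact Nat.mul_le_mul_left k (cycLen_le A hs1 h2)

lemma sec_cycLen_append [Finite X] (g : G) (v w : List X) :
    A.sec (g ^ cycLen A g (v ++ w)) (v ++ w)
      = A.sec ((A.sec (g ^ cycLen A g v) v) ^ cycLen A (A.sec (g ^ cycLen A g v) v) w) w := by
  rw [cycLen_append, A.sec_append, pow_mul, sec_pow_fixed A (cycLen_spec A g v).2]

lemma conj_cycLen [Finite X] (t h : G) (v : List X) :
    cycLen A (t * h * t⁻¹) v = cycLen A h (A.act t⁻¹ v) := by
  have hiff : ∀ j : ℕ, A.act ((t * h * t⁻¹) ^ j) v = v ↔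
      A.act (h ^ j) (A.act t⁻¹ v) = A.act t⁻¹ v := by
    intro j
    rw [conj_pow, A.act_mul, A.act_mul]
    constructor
    · intro hj
      have := congrArg (A.act t⁻¹) hj
      rwa [← A.act_mul, inv_mul_cancel, A.act_one] at this
    · intro hj
      rw [hj, ← A.act_mul, mul_inv_cancel, A.act_one]
  unfold cycLen
  congr 1
  ext j
  simp only [Set.mem_setOf_eq, hiff]

lemma conj_sec [Finite X] (t h : G) (v : List X) :
    IsConj (A.sec ((t * h * t⁻¹) ^ cycLen A (t * h * t⁻¹) v) v)
           (A.sec (h ^ cycLen A h (A.act t⁻¹ v)) (A.act t⁻¹ v)) := by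
  set w := A.act t⁻¹ v with hw
  set s := cycLen A h w with hs
  rw [conj_cycLen A t h v, ← hw, ← hs]
  have hfix : A.act (h ^ s) w = w := (cycLen_spec A h w).2
  have e3 : A.sec t w * A.sec t⁻¹ v = 1 := by
    have h0 := A.sec_mul t t⁻¹ v
    rw [mul_inv_cancel, A.sec_one] at h0
    exact h0.symm
  have e4 : A.sec t⁻¹ v = (A.sec t w)⁻¹ := eq_inv_of_mul_eq_one_right e3
  have key : A.sec ((t * h * t⁻¹) ^ s) v
      = A.sec t w * A.sec (h ^ s) w * (A.sec t w)⁻¹ := by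
    rw [conj_pow, mul_assoc, A.sec_mul t (h ^ s * t⁻¹) v, A.sec_mul (h ^ s) t⁻¹ v,
      A.act_mul, ← hw, hfix, e4, ← mul_assoc]
  rw [key]
  exact (isConj_iff.2 ⟨A.sec t w, rfl⟩).symm

lemma isConj_isOfFinOrder {a b : G} (hc : IsConj a b) (ha : IsOfFinOrder a) :
    IsOfFinOrder b := by
  obtain ⟨t, ht⟩ := isConj_iff.1 hc
  obtain ⟨N, hN, hNe⟩ := isOfFinOrder_iff_pow_eq_one.1 ha
  refine isOfFinOrder_iff_pow_eq_one.2 ⟨N, hN, ?_⟩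
  rw [← ht, conj_pow, hNe, mul_one, mul_inv_cancel]

lemma finOrder_sec [Finite X] {h : G} (hf : IsOfFinOrder h) (v : List X) :
    IsOfFinOrder (A.sec (h ^ cycLen A h v) v) := by
  obtain ⟨N, hN, hNe⟩ := isOfFinOrder_iff_pow_eq_one.1 hf
  refine isOfFinOrder_iff_pow_eq_one.2 ⟨N, hN, ?_⟩
  rw [← sec_pow_fixed A (cycLen_spec A h v).2, ← pow_mul, pow_mul', hNe, one_pow, A.sec_one]

noncomputable def actF (t : G) {n : ℕ} (u : Fin n → X) : Fin n → X :=
  fun i => (A.act t (List.ofFn u)).get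
    (Fin.cast (by rw [A.length_act, List.length_ofFn]) i)

lemma ofFn_actF (t : G) {n : ℕ} (u : Fin n → X) :
    List.ofFn (actF A t u) = A.act t (List.ofFn u) := by
  apply List.ext_get
  · rw [List.length_ofFn, A.length_act, List.length_ofFn]
  · intro i h1 h2
    rw [List.get_ofFn]
    simp only [actF]
    congr 1

lemma actF_mul (t s : G) {n : ℕ} (u : Fin n → X) :
    actF A (t * s) u = actF A t (actF A s u) :=
  List.ofFn_injective (by rw [ofFn_actF, ofFn_actF, ofFn_actF, A.act_mul])

lemma actF_one {n : ℕ} (u : Fin n → X) : actF A 1 u = u :=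
  List.ofFn_injective (by rw [ofFn_actF, A.act_one])

noncomputable def eFn (t : G) (n : ℕ) : (Fin n → X) ≃ (Fin n → X) where
  toFun := actF A t
  invFun := actF A t⁻¹
  left_inv u := by rw [← actF_mul, inv_mul_cancel, actF_one]
  right_inv u := by rw [← actF_mul, mul_inv_cancel, actF_one]

open Classical in
lemma sum_conj [Fintype X] (p : ℝ) (c : G) {h h' : G} (hc : IsConj h h') (n : ℕ) :
    (∑ u : Fin n → X, (cycLen A h' (List.ofFn u) : ℝ) ^ (-p) *
        (if IsConj (A.sec (h' ^ cycLen A h' (List.ofFn u)) (List.ofFn u)) c then 1 else 0))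
    = ∑ u : Fin n → X, (cycLen A h (List.ofFn u) : ℝ) ^ (-p) *
        (if IsConj (A.sec (h ^ cycLen A h (List.ofFn u)) (List.ofFn u)) c then 1 else 0) := by
  obtain ⟨t, ht⟩ := isConj_iff.1 hc
  subst ht
  apply Fintype.sum_equiv (eFn A t⁻¹ n)
  intro u
  have hw : A.act t⁻¹ (List.ofFn u) = List.ofFn (eFn A t⁻¹ n u) := (ofFn_actF A t⁻¹ u).symm
  have h1 : cycLen A (t * h * t⁻¹) (List.ofFn u)
      = cycLen A h (List.ofFn (eFn A t⁻¹ n u)) := by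
    rw [conj_cycLen, hw]
  have h2 := conj_sec A t h (List.ofFn u)
  rw [hw, h1] at h2
  rw [h1]
  congr 1
  by_cases hcj : IsConj
      (A.sec (h ^ cycLen A h (List.ofFn (eFn A t⁻¹ n u))) (List.ofFn (eFn A t⁻¹ n u))) c
  · rw [if_pos hcj, if_pos (h2.trans hcj)]
  · rw [if_neg hcj, if_neg (fun hx => hcj (h2.symm.trans hx))]

end SSGaux

open SSGaux in
open Classical in
lemma thurston_step {X G : Type*} [Fintype X] [Group G]
    (A : SelfSimilarGroup X G) (p : ℝ) {m : ℕ} (g : Fin m → G)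
    (hinf : ∀ i, ¬ IsOfFinOrder (g i))
    (hnconj : ∀ i j, i ≠ j → ¬ IsConj (g i) (g j))
    (hinv : ∀ (i : Fin m) (x : X),
      IsOfFinOrder (A.sec ((g i) ^ (cycLen A (g i) [x])) [x]) ∨
        ∃ j, IsConj (A.sec ((g i) ^ (cycLen A (g i) [x])) [x]) (g j)) (n : ℕ) :
    thurstonMatrix A p g (n + 1) = thurstonMatrix A p g 1 * thurstonMatrix A p g n := by
  ext i j
  rw [Matrix.mul_apply]
  simp only [thurstonMatrix, Matrix.of_apply]
  have hofc : ∀ (x : X) (u : Fin n → X),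
      List.ofFn (Fin.cons x u : Fin (n + 1) → X) = [x] ++ List.ofFn u := by
    intro x u
    simp [List.ofFn_succ]
  have hof1 : ∀ x : X, List.ofFn (fun _ : Fin 1 => x) = [x] := by
    intro x
    simp [List.ofFn_succ]
  -- abbreviations as functions
  have hL : (∑ v : Fin (n + 1) → X, (cycLen A (g i) (List.ofFn v) : ℝ) ^ (-p) *
        (if IsConj (A.sec ((g i) ^ (cycLen A (g i) (List.ofFn v))) (List.ofFn v)) (g j)
         then 1 else 0))
      = ∑ x : X, (cycLen A (g i) [x] : ℝ) ^ (-p) *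
          ∑ u : Fin n → X,
            (cycLen A (A.sec ((g i) ^ cycLen A (g i) [x]) [x]) (List.ofFn u) : ℝ) ^ (-p) *
              (if IsConj (A.sec ((A.sec ((g i) ^ cycLen A (g i) [x]) [x]) ^
                    cycLen A (A.sec ((g i) ^ cycLen A (g i) [x]) [x]) (List.ofFn u))
                  (List.ofFn u)) (g j) then 1 else 0) := by
    rw [← Equiv.sum_comp (Fin.consEquiv (fun _ : Fin (n + 1) => X)), Fintype.sum_prod_type]
    refine Finset.sum_congr rfl fun x _ => ?_
    rw [Finset.mul_sum]
    refine Finset.sum_congr rfl fun u _ => ?_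
    have hcons : (Fin.consEquiv (fun _ : Fin (n + 1) => X)) (x, u) = Fin.cons x u := rfl
    rw [hcons, hofc, sec_cycLen_append, cycLen_append]
    rw [Nat.cast_mul, Real.mul_rpow (by positivity) (by positivity)]
    ring
  have hR : ∀ l : Fin m, (∑ w : Fin 1 → X, (cycLen A (g i) (List.ofFn w) : ℝ) ^ (-p) *
        (if IsConj (A.sec ((g i) ^ (cycLen A (g i) (List.ofFn w)))
          (List.ofFn w)) (g l) then 1 else 0))
      = ∑ x : X, (cycLen A (g i) [x] : ℝ) ^ (-p) *
          (if IsConj (A.sec ((g i) ^ cycLen A (g i) [x]) [x]) (g l) then 1 else 0) := by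
    intro l
    rw [← Equiv.sum_comp (Equiv.funUnique (Fin 1) X).symm]
    refine Finset.sum_congr rfl fun x _ => ?_
    have he : (Equiv.funUnique (Fin 1) X).symm x = fun _ : Fin 1 => x := rfl
    rw [he, hof1]
  rw [hL]
  simp only [hR]
  have halg : ∀ (a : X → ℝ) (b : X → Fin m → ℝ) (T : Fin m → ℝ),
      (∑ l : Fin m, (∑ x : X, a x * b x l) * T l) = ∑ x : X, a x * ∑ l : Fin m, b x l * T l := by
    intro a b T
    simp only [Finset.sum_mul, Finset.mul_sum]
    rw [Finset.sum_comm]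
    exact Finset.sum_congr rfl fun x _ => Finset.sum_congr rfl fun l _ => by ring
  rw [halg (fun x => (cycLen A (g i) [x] : ℝ) ^ (-p))
      (fun x l => if IsConj (A.sec ((g i) ^ cycLen A (g i) [x]) [x]) (g l) then 1 else 0)
      (fun l => ∑ u : Fin n → X, (cycLen A (g l) (List.ofFn u) : ℝ) ^ (-p) *
        (if IsConj (A.sec ((g l) ^ (cycLen A (g l) (List.ofFn u))) (List.ofFn u)) (g j)
         then 1 else 0))]
  refine Finset.sum_congr rfl fun x _ => ?_
  congr 1
  by_cases hex : ∃ l, IsConj (A.sec ((g i) ^ cycLen A (g i) [x]) [x]) (g l)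
  · obtain ⟨l₀, hl₀⟩ := hex
    rw [Finset.sum_eq_single_of_mem l₀ (Finset.mem_univ _)
      (fun b _ hb => by
        rw [if_neg (fun hc => hnconj l₀ b (Ne.symm hb) (hl₀.symm.trans hc)), zero_mul]),
      if_pos hl₀, one_mul]
    exact (sum_conj A p (g j) hl₀ n).symm
  · have hfo : IsOfFinOrder (A.sec ((g i) ^ cycLen A (g i) [x]) [x]) :=
      (hinv i x).resolve_right hex
    trans (0 : ℝ)
    · apply Finset.sum_eq_zero
      intro u _
      rw [if_neg fun hc =>
        hinf j (isConj_isOfFinOrder hc (finOrder_sec A hfo (List.ofFn u))), mul_zero]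
    · symm
      apply Finset.sum_eq_zero
      intro l _
      rw [if_neg (not_exists.1 hex l), zero_mul]

/-- Lemma 4.9, matrix form. For pairwise non-conjugate infinite-order
elements `g₁,…,g_m` spanning a `T_p`-invariant subspace, the Thurston `p`-matrix associated
with the `n`-th level of the action is the `n`-th power of the first-level one:
`A^{(n)} = (A^{(1)})^n` for every `n ≥ 1`. -/

theorem thurstonMatrix_pow {X G : Type*} [Fintype X] [Nonempty X] [Group G]
    (A : SelfSimilarGroup X G)
    (p : ℝ) (hp : 1 ≤ p) {m : ℕ} (g : Fin m → G)
    (hinf : ∀ i, ¬ IsOfFinOrder (g i))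
    (hnconj : ∀ i j, i ≠ j → ¬ IsConj (g i) (g j))
    (hinv : ∀ (i : Fin m) (x : X),
      IsOfFinOrder (A.sec ((g i) ^ (cycLen A (g i) [x])) [x]) ∨
        ∃ j, IsConj (A.sec ((g i) ^ (cycLen A (g i) [x])) [x]) (g j)) :
    ∀ n : ℕ, 1 ≤ n → thurstonMatrix A p g n = (thurstonMatrix A p g 1) ^ n := by
  intro n hn
  induction n with
  | zero => omega
  | succ s ih =>
    by_cases hs : 1 ≤ s
    · rw [thurston_step A p g hinf hnconj hinv s, ih hs, ← pow_succ']
    · have hs0 : s = 0 := by omega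
      subst hs0
      rw [pow_one]
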